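/- arXiv:math/9905150 — 8 statements merged into one kernel-verified Lean document; each statement's English description precedes it below -/
import Mathlib

section
/- Let S be an even integral symmetric bilinear form (lattice) of rank 3 and signature (1,2) whose determinant d is square-free. If r ∈ S is a primitive root (i.e. r² < 0 and r² divides 2(r,x) for all x ∈ S), then r² is square-free, and every odd prime p dividing r² also divides d. -/
/-- The bilinear form on `ℤ³` given by a Gram matrix `G`. -/
def gram (G : Matrix (Fin 3) (Fin 3) ℤ) (x y : Fin 3 → ℤ) : ℤ :=
  dotProduct x (G.mulVec y)

/-- `G` is the Gram matrix of a hyperbolic lattice of rank 3: it is symmetric and,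
over `ℝ`, congruent to `diag (1, -1, -1)`, i.e. of signature `(1,2)`. -/
def IsHyperbolicRank3 (G : Matrix (Fin 3) (Fin 3) ℤ) : Prop :=
  G.IsSymm ∧ ∃ P : Matrix (Fin 3) (Fin 3) ℝ, IsUnit P.det ∧
    P.transpose * (G.map (Int.cast : ℤ → ℝ)) * P = Matrix.diagonal ![1, -1, -1]

/-- `r` is a root of the lattice with Gram matrix `G`: `r² < 0` and `r² ∣ 2(r,x)`
for all lattice vectors `x` (so the reflection in `r` preserves the lattice). -/
def IsRootOf (G : Matrix (Fin 3) (Fin 3) ℤ) (r : Fin 3 → ℤ) : Prop :=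
  gram G r r < 0 ∧ ∀ x : Fin 3 → ℤ, gram G r r ∣ 2 * gram G r x

/-- `r` is a primitive lattice vector: it is not a nontrivial integer multiple of
another lattice vector. -/
def IsPrimitiveVec (r : Fin 3 → ℤ) : Prop :=
  r ≠ 0 ∧ ∀ (n : ℤ) (v : Fin 3 → ℤ), r = n • v → IsUnit n

/- ### Auxiliary lemmas -/

/-- A primitive vector can be completed to a unimodular matrix having it as first
column. -/
lemma exists_unimodular_col (r : Fin 3 → ℤ)
    (h : Int.gcd (Int.gcd (r 0) (r 1) : ℤ) (r 2) = 1) :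
    ∃ W : Matrix (Fin 3) (Fin 3) ℤ, (∀ i, W i 0 = r i) ∧ IsUnit W.det := by
  by_cases hc : r 1 = 0 ∧ r 2 = 0
  · obtain ⟨h1, h2⟩ := hc
    have hr0 : (r 0).natAbs = 1 := by
      simpa [h1, h2, Int.gcd, Int.natAbs_abs] using h
    refine ⟨Matrix.of ![![r 0, 0, 0], ![0, 1, 0], ![0, 0, 1]], ?_, ?_⟩
    · intro i
      fin_cases i <;> simp [h1, h2, Matrix.vecHead, Matrix.vecTail]
    · have : Matrix.det (Matrix.of ![![r 0, 0, 0], ![0, 1, 0], ![0, 0, 1]]) = r 0 := by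
        simp [Matrix.det_fin_three]
      rw [this, Int.isUnit_iff]
      rcases Int.natAbs_eq (r 0) with he | he <;> omega
  · -- the gcd of the last two coordinates
    set g2 : ℕ := Int.gcd (r 1) (r 2) with hg2def
    have hg2ne : (g2 : ℤ) ≠ 0 := by
      intro hzero
      have : g2 = 0 := by exact_mod_cast hzero
      exact hc (Int.gcd_eq_zero_iff.mp this)
    set x := Int.gcdA (r 1) (r 2) with hxdef
    set y := Int.gcdB (r 1) (r 2) with hydef
    have hxy : (g2 : ℤ) = r 1 * x + r 2 * y := Int.gcd_eq_gcd_ab (r 1) (r 2)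
    set q1 := r 1 / (g2 : ℤ) with hq1def
    set q2 := r 2 / (g2 : ℤ) with hq2def
    have hq1 : (g2 : ℤ) * q1 = r 1 := Int.mul_ediv_cancel' (Int.gcd_dvd_left _ _)
    have hq2 : (g2 : ℤ) * q2 = r 2 := Int.mul_ediv_cancel' (Int.gcd_dvd_right _ _)
    -- gcd of r 0 and g2 is 1, by associativity of gcd
    have hassoc : Int.gcd (r 0) ((g2 : ℕ) : ℤ) = 1 := by
      have : Int.gcd (Int.gcd (r 0) (r 1) : ℤ) (r 2)
          = Int.gcd (r 0) ((Int.gcd (r 1) (r 2) : ℕ) : ℤ) := by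
        simp only [Int.gcd, Int.natAbs_natCast]
        exact Nat.gcd_assoc _ _ _
      rw [this] at h
      exact h
    set a := Int.gcdA (r 0) ((g2 : ℕ) : ℤ) with hadef
    set b := Int.gcdB (r 0) ((g2 : ℕ) : ℤ) with hbdef
    have hab : (1 : ℤ) = r 0 * a + (g2 : ℤ) * b := by
      have := Int.gcd_eq_gcd_ab (r 0) ((g2 : ℕ) : ℤ)
      rw [hassoc] at this
      exact_mod_cast this
    refine ⟨Matrix.of ![![r 0, -b, 0], ![r 1, a * q1, -y], ![r 2, a * q2, x]], ?_, ?_⟩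
    · intro i; fin_cases i <;> simp [Matrix.vecHead, Matrix.vecTail]
    · have hq : q1 * x + q2 * y = 1 := by
        apply mul_left_cancel₀ hg2ne
        have : (g2 : ℤ) * (q1 * x + q2 * y) = (g2 : ℤ) * q1 * x + (g2 : ℤ) * q2 * y := by ring
        rw [this, hq1, hq2, mul_one]
        exact hxy.symm
      have hdet : Matrix.det (Matrix.of ![![r 0, -b, 0], ![r 1, a * q1, -y], ![r 2, a * q2, x]])
          = r 0 * a * (q1 * x + q2 * y) + b * (r 1 * x + r 2 * y) := by
        simp [Matrix.det_fin_three]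
        ring
      rw [hdet, hq, ← hxy, mul_one]
      rw [Int.isUnit_iff]
      left
      linarith [hab]

/-- Entries of a congruence transform, expressed via `gram`. -/
lemma conj_apply (G W : Matrix (Fin 3) (Fin 3) ℤ) (i j : Fin 3) :
    (W.transpose * G * W) i j = gram G (fun k => W k i) (fun k => W k j) := by
  simp [gram, Matrix.mul_apply, dotProduct, Matrix.mulVec, Matrix.transpose_apply,
    Finset.sum_mul, Finset.mul_sum, Fin.sum_univ_three]
  ring

/-- If `S` is an even hyperbolic lattice of rank 3 with square-free determinant `d`
and `r` is a primitive root of `S`, then `r²` is square-free and every odd prime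
dividing `r²` also divides `d`. -/
theorem squarefree_root_square (G : Matrix (Fin 3) (Fin 3) ℤ)
    (hhyp : IsHyperbolicRank3 G)
    (heven : ∀ x : Fin 3 → ℤ, 2 ∣ gram G x x)
    (hsf : Squarefree G.det)
    (r : Fin 3 → ℤ) (hr : IsRootOf G r) (hprim : IsPrimitiveVec r) :
    Squarefree (gram G r r) ∧
      ∀ p : ℕ, p.Prime → Odd p → (p : ℤ) ∣ gram G r r → (p : ℤ) ∣ G.det := by
  obtain ⟨hsymm, -⟩ := hhyp
  obtain ⟨hlt, hdvd⟩ := hr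
  set N := gram G r r with hNdef
  -- (r, x) as a dot product with G.mulVec r
  have hgram : ∀ x : Fin 3 → ℤ, gram G r x = dotProduct (G.mulVec r) x := by
    intro x
    rw [gram, Matrix.dotProduct_mulVec]
    congr 1
    funext k
    simp only [Matrix.vecMul, Matrix.mulVec, dotProduct]
    exact Finset.sum_congr rfl fun j _ => by rw [← hsymm.apply j k]; ring
  -- N divides twice each coordinate of G.mulVec r
  have hcol : ∀ i, N ∣ 2 * G.mulVec r i := by
    intro i
    have h := hdvd (Pi.single i 1)
    rwa [hgram, dotProduct_single, mul_one] at h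
  -- N divides 2 * det * r i
  have hadj : ∀ i, N ∣ 2 * G.det * r i := by
    intro i
    have key : (G.adjugate).mulVec (G.mulVec r) = G.det • r := by
      rw [Matrix.mulVec_mulVec, Matrix.adjugate_mul, Matrix.smul_mulVec,
        Matrix.one_mulVec]
    have hi : G.det * r i = ∑ j, G.adjugate i j * G.mulVec r j := by
      have := congrFun key i
      simpa [Matrix.mulVec, dotProduct] using this.symm
    have : 2 * G.det * r i = ∑ j, G.adjugate i j * (2 * G.mulVec r j) := by
      rw [Finset.sum_congr rfl (fun j _ => by ring : ∀ j ∈ Finset.univ,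
        G.adjugate i j * (2 * G.mulVec r j) = 2 * (G.adjugate i j * G.mulVec r j))]
      rw [← Finset.mul_sum, ← hi, mul_assoc]
    rw [this]
    exact Finset.dvd_sum fun j _ => Dvd.dvd.mul_left (hcol j) _
  -- gcd of coordinates of r is 1
  have hgcd : Int.gcd (Int.gcd (r 0) (r 1) : ℤ) (r 2) = 1 := by
    set g : ℕ := Int.gcd (Int.gcd (r 0) (r 1) : ℤ) (r 2) with hgdef
    have hgg : (g : ℤ) ∣ ((Int.gcd (r 0) (r 1) : ℕ) : ℤ) := by
      apply Int.natCast_dvd_natCast.mpr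
      show Int.gcd ((Int.gcd (r 0) (r 1) : ℕ) : ℤ) (r 2) ∣ Int.gcd (r 0) (r 1)
      simpa [Int.gcd, Int.natAbs_natCast] using
        Nat.gcd_dvd_left (Int.gcd (r 0) (r 1)) (r 2).natAbs
    have hdvdg : ∀ i, (g : ℤ) ∣ r i := by
      intro i
      fin_cases i
      · exact dvd_trans hgg (Int.gcd_dvd_left _ _)
      · exact dvd_trans hgg (Int.gcd_dvd_right _ _)
      · exact Int.gcd_dvd_right _ _
    have hrv : r = (g : ℤ) • fun i => r i / (g : ℤ) := by
      funext i
      simp only [Pi.smul_apply, smul_eq_mul]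
      exact (Int.mul_ediv_cancel' (hdvdg i)).symm
    have := hprim.2 _ _ hrv
    rw [Int.isUnit_iff] at this
    omega
  -- Bezout for three coordinates
  obtain ⟨c0, c1, c2, hbez⟩ : ∃ c0 c1 c2 : ℤ, r 0 * c0 + r 1 * c1 + r 2 * c2 = 1 := by
    have h1 := Int.gcd_eq_gcd_ab (r 0) (r 1)
    have h2 := Int.gcd_eq_gcd_ab ((Int.gcd (r 0) (r 1) : ℕ) : ℤ) (r 2)
    rw [show Int.gcd ((Int.gcd (r 0) (r 1) : ℕ) : ℤ) (r 2)
        = Int.gcd (Int.gcd (r 0) (r 1) : ℤ) (r 2) from rfl, hgcd] at h2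
    refine ⟨Int.gcdA (r 0) (r 1) * Int.gcdA ((Int.gcd (r 0) (r 1) : ℕ) : ℤ) (r 2),
      Int.gcdB (r 0) (r 1) * Int.gcdA ((Int.gcd (r 0) (r 1) : ℕ) : ℤ) (r 2),
      Int.gcdB ((Int.gcd (r 0) (r 1) : ℕ) : ℤ) (r 2), ?_⟩
    linear_combination (-(Int.gcdA ((Int.gcd (r 0) (r 1) : ℕ) : ℤ) (r 2))) * h1 - h2
  -- hence N divides 2 * det
  have hN2d : N ∣ 2 * G.det := by
    have : 2 * G.det = (2 * G.det * r 0) * c0 + (2 * G.det * r 1) * c1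
        + (2 * G.det * r 2) * c2 := by
      linear_combination (-(2 * G.det)) * hbez
    rw [this]
    exact dvd_add (dvd_add ((hadj 0).mul_right _) ((hadj 1).mul_right _)) ((hadj 2).mul_right _)
  -- the determinant is not zero (squarefree)
  -- odd primes p : p^k ∣ N → p^k ∣ det for k = 1, 2
  have hodd : ∀ p : ℕ, p.Prime → Odd p →
      (∀ k : ℤ, ((p : ℤ) = k ∨ (p : ℤ) * (p : ℤ) = k) → k ∣ N → k ∣ G.det) := by
    intro p pp podd k hk hkN
    have hcop : IsCoprime ((p : ℤ)) 2 := by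
      rw [Int.isCoprime_iff_gcd_eq_one]
      have : Nat.Coprime p 2 := (Nat.Prime.coprime_iff_not_dvd pp).mpr (by
        intro hp2
        have hp2' : p = 2 := (Nat.prime_dvd_prime_iff_eq pp Nat.prime_two).mp hp2
        rcases podd with ⟨m, hm⟩
        omega)
      simpa [Int.gcd] using this
    have hkcop : IsCoprime k 2 := by
      rcases hk with h | h
      · rwa [← h]
      · rw [← h]; exact hcop.mul_left hcop
    have : k ∣ 2 * G.det := dvd_trans hkN hN2d
    exact hkcop.dvd_of_dvd_mul_left this
  -- 4 does not divide N
  have h4 : ¬ ((4 : ℤ) ∣ N) := by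
    intro h4N
    have h2col : ∀ i, 2 ∣ G.mulVec r i := by
      intro i
      have := dvd_trans h4N (hcol i)
      omega
    obtain ⟨W, hW0, hWdet⟩ := exists_unimodular_col r hgcd
    set M := W.transpose * G * W with hMdef
    have hMdet : M.det = G.det := by
      rw [hMdef, Matrix.det_mul, Matrix.det_mul, Matrix.det_transpose]
      rcases Int.isUnit_iff.mp hWdet with h | h <;> rw [h] <;> ring
    have hcolfun : (fun k => W k 0) = r := funext hW0
    have hM00 : M 0 0 = N := by
      rw [hMdef, conj_apply, hcolfun]
    have hMi0 : ∀ i, 2 ∣ M i 0 := by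
      intro i
      rw [hMdef, conj_apply, hcolfun]
      simp only [gram, dotProduct, Fin.sum_univ_three]
      exact dvd_add (dvd_add (Dvd.dvd.mul_left (h2col 0) _) (Dvd.dvd.mul_left (h2col 1) _))
        (Dvd.dvd.mul_left (h2col 2) _)
    have hM0j : ∀ j, 2 ∣ M 0 j := by
      intro j
      rw [hMdef, conj_apply, hcolfun, hgram]
      simp only [dotProduct, Fin.sum_univ_three]
      exact dvd_add (dvd_add (Dvd.dvd.mul_right (h2col 0) _) (Dvd.dvd.mul_right (h2col 1) _))
        (Dvd.dvd.mul_right (h2col 2) _)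
    have h4M00 : (4 : ℤ) ∣ M 0 0 := hM00 ▸ h4N
    obtain ⟨α, hα⟩ := h4M00
    obtain ⟨β, hβ⟩ := hM0j 1
    obtain ⟨γ, hγ⟩ := hM0j 2
    obtain ⟨δ, hδ⟩ := hMi0 1
    obtain ⟨ε, hε⟩ := hMi0 2
    have h4det : (4 : ℤ) ∣ M.det := by
      rw [Matrix.det_fin_three, hα, hβ, hγ, hδ, hε]
      exact ⟨α * M 1 1 * M 2 2 - α * M 1 2 * M 2 1 - β * δ * M 2 2 + β * M 1 2 * ε
        + γ * δ * M 2 1 - γ * M 1 1 * ε, by ring⟩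
    rw [hMdet] at h4det
    have : IsUnit (2 : ℤ) := hsf 2 (by
      obtain ⟨c, hc⟩ := h4det
      exact ⟨c, by linarith⟩)
    rw [Int.isUnit_iff] at this
    omega
  constructor
  · -- squarefreeness of N
    rw [← Int.squarefree_natAbs]
    rw [Nat.squarefree_iff_prime_squarefree]
    intro p pp hpN
    have hpNZ : ((p : ℤ)) * (p : ℤ) ∣ N := by
      rw [← Int.natAbs_dvd_natAbs]
      simpa [Int.natAbs_mul] using hpN
    by_cases hp2 : p = 2
    · subst hp2
      have h4' : (4 : ℤ) ∣ N := by
        have : ((2 : ℕ) : ℤ) * ((2 : ℕ) : ℤ) = (4 : ℤ) := by norm_num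
        rwa [this] at hpNZ
      exact h4 h4'
    · have podd := pp.odd_of_ne_two hp2
      have hdet : ((p : ℤ)) * (p : ℤ) ∣ G.det :=
        hodd p pp podd _ (Or.inr rfl) hpNZ
      have := hsf _ hdet
      rw [Int.isUnit_iff] at this
      have hple := pp.two_le
      omega
  · intro p pp podd hpN
    exact hodd p pp podd _ (Or.inl rfl) hpN
end

section
/- Let S be a hyperbolic lattice of rank 3 with square-free determinant d, and let r₁, r₂ be two primitive roots of S with r₂ not a rational multiple of r₁ and (r₁,r₂) = 0. Then for every odd prime p, p divides at most one of r₁² and r₂²; consequently gcd(r₁², r₂²) ≤ 2. -/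
lemma gram_expand (G : Matrix (Fin 3) (Fin 3) ℤ) (x y : Fin 3 → ℤ) :
    gram G x y = ∑ i, ∑ j, x i * (G i j * y j) := by
  simp [gram, Matrix.mulVec, dotProduct, Finset.mul_sum]

lemma gram_lin (G : Matrix (Fin 3) (Fin 3) ℤ) (x y z : Fin 3 → ℤ) (a b : ℤ) :
    gram G x (fun j => a * y j + b * z j) = a * gram G x y + b * gram G x z := by
  simp only [gram_expand, Finset.mul_sum, ← Finset.sum_add_distrib]
  refine Finset.sum_congr rfl fun i _ => Finset.sum_congr rfl fun j _ => by ring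

lemma gram_symm {G : Matrix (Fin 3) (Fin 3) ℤ} (hG : G.IsSymm) (x y : Fin 3 → ℤ) :
    gram G x y = gram G y x := by
  simp only [gram_expand]
  rw [Finset.sum_comm]
  refine Finset.sum_congr rfl fun j _ => Finset.sum_congr rfl fun i _ => ?_
  rw [← hG.apply i j]; ring

lemma N_apply (A G : Matrix (Fin 3) (Fin 3) ℤ) (i j : Fin 3) :
    (A * G * A.transpose) i j = gram G (A i) (A j) := by
  simp only [gram_expand, Matrix.mul_apply, Matrix.transpose_apply, Finset.sum_mul]
  rw [Finset.sum_comm]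
  exact Finset.sum_congr rfl fun k _ => Finset.sum_congr rfl fun l _ => by ring

lemma detdvd1 (N : Matrix (Fin 3) (Fin 3) ℤ) (q : ℤ)
    (h0 : ∀ j, q ∣ N 0 j) (h1 : ∀ j, q ∣ N 1 j) : q * q ∣ N.det := by
  obtain ⟨a0, ha0⟩ := h0 0; obtain ⟨a1, ha1⟩ := h0 1; obtain ⟨a2, ha2⟩ := h0 2
  obtain ⟨b0, hb0⟩ := h1 0; obtain ⟨b1, hb1⟩ := h1 1; obtain ⟨b2, hb2⟩ := h1 2
  rw [Matrix.det_fin_three, ha0, ha1, ha2, hb0, hb1, hb2]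
  exact ⟨a0*b1*N 2 2 - a0*b2*N 2 1 - a1*b0*N 2 2 + a1*b2*N 2 0 + a2*b0*N 2 1
    - a2*b1*N 2 0, by ring⟩

lemma detdvd2 (N : Matrix (Fin 3) (Fin 3) ℤ)
    (h00 : 4 ∣ N 0 0) (h0 : ∀ j, 2 ∣ N 0 j) (hc : ∀ j, 2 ∣ N j 0) : 4 ∣ N.det := by
  obtain ⟨c, hcc⟩ := h00
  obtain ⟨a1, ha1⟩ := h0 1; obtain ⟨a2, ha2⟩ := h0 2
  obtain ⟨b1, hb1⟩ := hc 1; obtain ⟨b2, hb2⟩ := hc 2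
  rw [Matrix.det_fin_three, hcc, ha1, ha2, hb1, hb2]
  exact ⟨c*N 1 1*N 2 2 - c*N 1 2*N 2 1 - a1*b1*N 2 2 + a1*N 1 2*b2 + a2*b1*N 2 1
    - a2*N 1 1*b2, by ring⟩

lemma detA1 (r₁ r₂ : Fin 3 → ℤ) :
    (Matrix.of ![r₁, r₂, ![0,0,1]]).det = r₁ 0 * r₂ 1 - r₁ 1 * r₂ 0 := by
  simp only [Matrix.det_fin_three, Matrix.of_apply, Matrix.cons_val', Matrix.cons_val_zero,
    Matrix.cons_val_one, Matrix.head_cons, Matrix.empty_val', Matrix.cons_val_fin_one,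
    Matrix.cons_val_two, Matrix.tail_cons, Matrix.head_fin_const]
  ring

lemma detA2 (r₁ r₂ : Fin 3 → ℤ) :
    (Matrix.of ![r₁, r₂, ![0,1,0]]).det = -(r₁ 0 * r₂ 2 - r₁ 2 * r₂ 0) := by
  simp only [Matrix.det_fin_three, Matrix.of_apply, Matrix.cons_val', Matrix.cons_val_zero,
    Matrix.cons_val_one, Matrix.head_cons, Matrix.empty_val', Matrix.cons_val_fin_one,
    Matrix.cons_val_two, Matrix.tail_cons, Matrix.head_fin_const]
  ring

lemma detA3 (r₁ r₂ : Fin 3 → ℤ) :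
    (Matrix.of ![r₁, r₂, ![1,0,0]]).det = r₁ 1 * r₂ 2 - r₁ 2 * r₂ 1 := by
  simp only [Matrix.det_fin_three, Matrix.of_apply, Matrix.cons_val', Matrix.cons_val_zero,
    Matrix.cons_val_one, Matrix.head_cons, Matrix.empty_val', Matrix.cons_val_fin_one,
    Matrix.cons_val_two, Matrix.tail_cons, Matrix.head_fin_const]
  ring

lemma detAe1 (r : Fin 3 → ℤ) :
    (Matrix.of ![r, ![0,1,0], ![0,0,1]]).det = r 0 := by
  simp only [Matrix.det_fin_three, Matrix.of_apply, Matrix.cons_val', Matrix.cons_val_zero,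
    Matrix.cons_val_one, Matrix.head_cons, Matrix.empty_val', Matrix.cons_val_fin_one,
    Matrix.cons_val_two, Matrix.tail_cons, Matrix.head_fin_const]
  ring

lemma detAe2 (r : Fin 3 → ℤ) :
    (Matrix.of ![r, ![1,0,0], ![0,0,1]]).det = -r 1 := by
  simp only [Matrix.det_fin_three, Matrix.of_apply, Matrix.cons_val', Matrix.cons_val_zero,
    Matrix.cons_val_one, Matrix.head_cons, Matrix.empty_val', Matrix.cons_val_fin_one,
    Matrix.cons_val_two, Matrix.tail_cons, Matrix.head_fin_const]
  ring

lemma detAe3 (r : Fin 3 → ℤ) :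
    (Matrix.of ![r, ![1,0,0], ![0,1,0]]).det = r 2 := by
  simp only [Matrix.det_fin_three, Matrix.of_apply, Matrix.cons_val', Matrix.cons_val_zero,
    Matrix.cons_val_one, Matrix.head_cons, Matrix.empty_val', Matrix.cons_val_fin_one,
    Matrix.cons_val_two, Matrix.tail_cons, Matrix.head_fin_const]
  ring

lemma detN (A G : Matrix (Fin 3) (Fin 3) ℤ) :
    (A * G * A.transpose).det = A.det * A.det * G.det := by
  rw [Matrix.det_mul, Matrix.det_mul, Matrix.det_transpose]; ring

lemma ppdvd {p a d : ℤ} (hp : Prime p) (h : p * p ∣ a * a * d) (ha : ¬ p ∣ a) :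
    p * p ∣ d := by
  have h1 : p ∣ a * a * d := dvd_trans (dvd_mul_right p p) h
  have hd : p ∣ d := by
    rcases hp.dvd_mul.mp h1 with h' | h'
    · exact absurd ((hp.dvd_mul.mp h').elim id id) ha
    · exact h'
  obtain ⟨e, he⟩ := hd
  have h2 : p * p ∣ (a * a * e) * p := by
    rw [he] at h; convert h using 1; ring
  have h3 : p ∣ a * a * e := by
    have := (mul_dvd_mul_iff_right hp.ne_zero (a := p) (b := a * a * e)).mp h2
    exact this
  have hpe : p ∣ e := by
    rcases hp.dvd_mul.mp h3 with h' | h'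
    · exact absurd ((hp.dvd_mul.mp h').elim id id) ha
    · exact h'
  obtain ⟨f, hf⟩ := hpe
  exact ⟨f, by rw [he, hf]; ring⟩

lemma not_dvd_of_primitive {p : ℕ} (hp : p.Prime) (r : Fin 3 → ℤ)
    (hprim : IsPrimitiveVec r) : ∃ k, ¬ (p : ℤ) ∣ r k := by
  by_contra h
  push_neg at h
  have hr : r = (p : ℤ) • fun i => r i / p := by
    funext i
    simp only [Pi.smul_apply, smul_eq_mul]
    exact (Int.mul_ediv_cancel' (h i)).symm
  have := hprim.2 _ _ hr
  rw [Int.isUnit_iff] at this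
  have := hp.two_le
  omega

lemma not_unit_sq {p : ℕ} (hp : p.Prime) {d : ℤ} (hsf : Squarefree d)
    (h : (p:ℤ) * (p:ℤ) ∣ d) : False := by
  have := hsf _ h
  rw [Int.isUnit_iff] at this
  have := hp.two_le
  omega

/-- Case A engine: if rows 0,1 of `A` are `r₁,r₂` with `p ∣ (rᵢ, x)` for all `x`,
and `p ∤ det A`, then `p² ∣ det G`, contradicting squarefreeness. -/
lemma caseA {G : Matrix (Fin 3) (Fin 3) ℤ} (hsf : Squarefree G.det)
    {p : ℕ} (hp : p.Prime) {r₁ r₂ : Fin 3 → ℤ}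
    (hg1 : ∀ x, (p:ℤ) ∣ gram G r₁ x) (hg2 : ∀ x, (p:ℤ) ∣ gram G r₂ x)
    (A : Matrix (Fin 3) (Fin 3) ℤ) (hA0 : A 0 = r₁) (hA1 : A 1 = r₂)
    (hdA : ¬ (p:ℤ) ∣ A.det) : False := by
  have h0 : ∀ j, (p:ℤ) ∣ (A * G * A.transpose) 0 j := fun j => by
    rw [N_apply, hA0]; exact hg1 _
  have h1 : ∀ j, (p:ℤ) ∣ (A * G * A.transpose) 1 j := fun j => by
    rw [N_apply, hA1]; exact hg2 _
  have h := detdvd1 _ _ h0 h1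
  rw [detN] at h
  exact not_unit_sq hp hsf (ppdvd ((Nat.prime_iff_prime_int.mp hp)) h hdA)

/-- An odd prime cannot divide both `r₁²` and `r₂²`. -/
lemma odd_lemma {G : Matrix (Fin 3) (Fin 3) ℤ} (hsf : Squarefree G.det)
    {r₁ r₂ : Fin 3 → ℤ} (hr₁ : IsRootOf G r₁) (hr₂ : IsRootOf G r₂)
    (hprim₁ : IsPrimitiveVec r₁) (hprim₂ : IsPrimitiveVec r₂)
    (horth : gram G r₁ r₂ = 0) {p : ℕ} (hp : p.Prime) (hodd : Odd p) :
    ¬ ((p : ℤ) ∣ gram G r₁ r₁ ∧ (p : ℤ) ∣ gram G r₂ r₂) := by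
  rintro ⟨hd1, hd2⟩
  have hpz : Prime (p : ℤ) := Nat.prime_iff_prime_int.mp hp
  have hp2 : ¬ (p : ℤ) ∣ 2 := by
    intro h
    have : (p : ℤ) ∣ ((2:ℕ) : ℤ) := by exact_mod_cast h
    have h2 : p ∣ 2 := Int.ofNat_dvd.mp this
    have := (Nat.prime_dvd_prime_iff_eq hp Nat.prime_two).mp h2
    rw [this] at hodd
    exact absurd hodd (by decide)
  have hg1 : ∀ x, (p : ℤ) ∣ gram G r₁ x := fun x => by
    have h := dvd_trans hd1 (hr₁.2 x)
    rcases hpz.dvd_mul.mp h with h' | h'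
    · exact absurd h' hp2
    · exact h'
  have hg2 : ∀ x, (p : ℤ) ∣ gram G r₂ x := fun x => by
    have h := dvd_trans hd2 (hr₂.2 x)
    rcases hpz.dvd_mul.mp h with h' | h'
    · exact absurd h' hp2
    · exact h'
  by_cases h01 : (p:ℤ) ∣ r₁ 0 * r₂ 1 - r₁ 1 * r₂ 0
  case neg =>
    exact caseA hsf hp hg1 hg2 (Matrix.of ![r₁, r₂, ![0,0,1]]) rfl rfl
      (by rw [detA1]; exact h01)
  by_cases h02 : (p:ℤ) ∣ r₁ 0 * r₂ 2 - r₁ 2 * r₂ 0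
  case neg =>
    exact caseA hsf hp hg1 hg2 (Matrix.of ![r₁, r₂, ![0,1,0]]) rfl rfl
      (by rw [detA2]; exact fun h => h02 (dvd_neg.mp h))
  by_cases h12 : (p:ℤ) ∣ r₁ 1 * r₂ 2 - r₁ 2 * r₂ 1
  case neg =>
    exact caseA hsf hp hg1 hg2 (Matrix.of ![r₁, r₂, ![1,0,0]]) rfl rfl
      (by rw [detA3]; exact h12)
  -- Case B : all minors divisible by p, so r₂ ≡ c·r₁ (mod p)
  have hmin : ∀ i j : Fin 3, (p:ℤ) ∣ r₁ i * r₂ j - r₁ j * r₂ i := by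
    intro i j
    obtain ⟨c01, hc01⟩ := h01; obtain ⟨c02, hc02⟩ := h02; obtain ⟨c12, hc12⟩ := h12
    fin_cases i <;> fin_cases j
    · exact ⟨0, by ring⟩
    · exact ⟨c01, hc01⟩
    · exact ⟨c02, hc02⟩
    · show (p:ℤ) ∣ r₁ 1 * r₂ 0 - r₁ 0 * r₂ 1
      exact ⟨-c01, by linear_combination -hc01⟩
    · exact ⟨0, by ring⟩
    · exact ⟨c12, hc12⟩
    · show (p:ℤ) ∣ r₁ 2 * r₂ 0 - r₁ 0 * r₂ 2
      exact ⟨-c02, by linear_combination -hc02⟩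
    · show (p:ℤ) ∣ r₁ 2 * r₂ 1 - r₁ 1 * r₂ 2
      exact ⟨-c12, by linear_combination -hc12⟩
    · exact ⟨0, by ring⟩
  obtain ⟨k, hk⟩ := not_dvd_of_primitive hp r₁ hprim₁
  obtain ⟨u, v, huv⟩ := (hpz.coprime_iff_not_dvd).mpr hk
  set c : ℤ := v * r₂ k with hc_def
  have hdiv : ∀ j, (p:ℤ) ∣ (r₂ j - c * r₁ j) := by
    intro j
    have h1 := hmin k j
    have heq : r₂ j - c * r₁ j = (p:ℤ) * (u * r₂ j) + v * (r₁ k * r₂ j - r₁ j * r₂ k) := by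
      rw [hc_def]; linear_combination -(r₂ j) * huv
    rw [heq]
    exact dvd_add ⟨u * r₂ j, rfl⟩ (Dvd.dvd.mul_left h1 v)
  set w : Fin 3 → ℤ := fun j => (r₂ j - c * r₁ j) / p with hw_def
  have hw : ∀ j, r₂ j = c * r₁ j + (p:ℤ) * w j := by
    intro j
    have h2 : (p:ℤ) * w j = r₂ j - c * r₁ j := Int.mul_ediv_cancel' (hdiv j)
    linarith
  have hgr : gram G r₁ r₂ = c * gram G r₁ r₁ + (p:ℤ) * gram G r₁ w := by
    have : r₂ = fun j => c * r₁ j + (p:ℤ) * w j := funext hw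
    rw [show gram G r₁ r₂ = gram G r₁ (fun j => c * r₁ j + (p:ℤ) * w j) by rw [← this]]
    exact gram_lin G r₁ r₁ w c p
  obtain ⟨t, ht⟩ := hr₁.2 w
  have hs1 : gram G r₁ r₁ ≠ 0 := ne_of_lt hr₁.1
  have key : 2 * c + (p:ℤ) * t = 0 := by
    have h0 : gram G r₁ r₁ * (2 * c + (p:ℤ) * t) = 0 := by
      linear_combination (-2) * hgr + 2 * horth + (-(p:ℤ)) * ht
    exact (mul_eq_zero.mp h0).resolve_left hs1
  have h2c : (p:ℤ) ∣ 2 * c := ⟨-t, by linarith⟩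
  have hcdvd : (p:ℤ) ∣ c := (hpz.dvd_mul.mp h2c).resolve_left hp2
  obtain ⟨m, hm⟩ := not_dvd_of_primitive hp r₂ hprim₂
  exact hm (by rw [hw m]; exact dvd_add (hcdvd.mul_right _) ⟨w m, rfl⟩)

/-- `4` cannot divide the square of a primitive root. -/
lemma even_lemma {G : Matrix (Fin 3) (Fin 3) ℤ} (hG : G.IsSymm) (hsf : Squarefree G.det)
    {r : Fin 3 → ℤ} (hr : IsRootOf G r) (hprim : IsPrimitiveVec r) :
    ¬ (4:ℤ) ∣ gram G r r := by
  intro h4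
  have hg : ∀ x, (2:ℤ) ∣ gram G r x := by
    intro x
    obtain ⟨c, hc⟩ := dvd_trans h4 (hr.2 x)
    exact ⟨c, by omega⟩
  have main : ∀ A : Matrix (Fin 3) (Fin 3) ℤ, A 0 = r → ¬ (2:ℤ) ∣ A.det → False := by
    intro A hA0 hdA
    have h00 : (4:ℤ) ∣ (A * G * A.transpose) 0 0 := by rw [N_apply, hA0]; exact h4
    have h0 : ∀ j, (2:ℤ) ∣ (A * G * A.transpose) 0 j := fun j => by
      rw [N_apply, hA0]; exact hg _
    have hcj : ∀ j, (2:ℤ) ∣ (A * G * A.transpose) j 0 := fun j => by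
      rw [N_apply, hA0, gram_symm hG]; exact hg _
    have h := detdvd2 _ h00 h0 hcj
    rw [detN] at h
    have h' : (2:ℤ) * 2 ∣ A.det * A.det * G.det := by
      have : (4:ℤ) = 2 * 2 := by norm_num
      rwa [this] at h
    have := ppdvd Int.prime_two h' hdA
    exact not_unit_sq Nat.prime_two hsf (by exact_mod_cast this)
  obtain ⟨k, hk⟩ := not_dvd_of_primitive Nat.prime_two r hprim
  have hk' : ¬ (2:ℤ) ∣ r k := by exact_mod_cast hk
  fin_cases k
  · exact main (Matrix.of ![r, ![0,1,0], ![0,0,1]]) rfl (by rw [detAe1]; exact hk')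
  · exact main (Matrix.of ![r, ![1,0,0], ![0,0,1]]) rfl
      (by rw [detAe2]; exact fun h => hk' (dvd_neg.mp h))
  · exact main (Matrix.of ![r, ![1,0,0], ![0,1,0]]) rfl (by rw [detAe3]; exact hk')

/-- If `r₁, r₂` are primitive roots of a hyperbolic lattice of rank 3 with square-free
determinant, `r₂` is not a rational multiple of `r₁`, and `(r₁, r₂) = 0`, then every
odd prime divides at most one of `r₁², r₂²`; consequently `gcd(r₁², r₂²) ≤ 2`. -/
theorem gcd_of_orthogonal_roots (G : Matrix (Fin 3) (Fin 3) ℤ)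
    (hhyp : IsHyperbolicRank3 G)
    (hsf : Squarefree G.det)
    (r₁ r₂ : Fin 3 → ℤ)
    (hr₁ : IsRootOf G r₁) (hr₂ : IsRootOf G r₂)
    (hprim₁ : IsPrimitiveVec r₁) (hprim₂ : IsPrimitiveVec r₂)
    (hnotmul : ∀ a b : ℤ, b ≠ 0 → b • r₂ ≠ a • r₁)
    (horth : gram G r₁ r₂ = 0) :
    (∀ p : ℕ, p.Prime → Odd p →
      ¬ ((p : ℤ) ∣ gram G r₁ r₁ ∧ (p : ℤ) ∣ gram G r₂ r₂)) ∧
    Int.gcd (gram G r₁ r₁) (gram G r₂ r₂) ≤ 2 := by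
  constructor
  · intro p hp hodd
    exact odd_lemma hsf hr₁ hr₂ hprim₁ hprim₂ horth hp hodd
  · set g := Int.gcd (gram G r₁ r₁) (gram G r₂ r₂) with hg
    by_contra hgt
    push_neg at hgt
    have hg1 : g ≠ 1 := by omega
    have hgd1 : (g : ℤ) ∣ gram G r₁ r₁ := Int.gcd_dvd_left _ _
    have hgd2 : (g : ℤ) ∣ gram G r₂ r₂ := Int.gcd_dvd_right _ _
    have noOdd : ∀ q : ℕ, q.Prime → q ∣ g → q = 2 := by
      intro q hq hqg
      by_contra hne
      exact odd_lemma hsf hr₁ hr₂ hprim₁ hprim₂ horth hq (hq.odd_of_ne_two hne)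
        ⟨dvd_trans (Int.natCast_dvd_natCast.mpr hqg) hgd1,
         dvd_trans (Int.natCast_dvd_natCast.mpr hqg) hgd2⟩
    have h2g : 2 ∣ g := by
      have h := Nat.minFac_dvd g
      rwa [noOdd _ (Nat.minFac_prime hg1) h] at h
    have hq2 : g / 2 ≠ 1 := by omega
    have hqd : (g / 2).minFac ∣ g :=
      dvd_trans (Nat.minFac_dvd _) (Nat.div_dvd_of_dvd h2g)
    have hm2 := noOdd _ (Nat.minFac_prime hq2) hqd
    have h4 : 4 ∣ g := by
      have h2' : (g / 2).minFac ∣ g / 2 := Nat.minFac_dvd _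
      rw [hm2] at h2'
      omega
    have h4' : (4 : ℤ) ∣ gram G r₁ r₁ := by
      refine dvd_trans ?_ hgd1
      exact_mod_cast Int.natCast_dvd_natCast.mpr h4
    exact even_lemma hhyp.1 hsf hr₁ hprim₁ h4'
end

section
/- If θ₁ ≥ θ₃ ≥ θ₂ > 0 with θ₂ + θ₃ = θ and θ₂ ≤ θ/2 ≤ θ₃ ≤ θ₁, then sinh((θ₁+θ₂)/2)·sinh((θ₃+θ₂)/2) / (sinh(θ₁/2)·sinh(θ₃/2)) ≤ 2·cosh(θ/2) + 2. -/
open Real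

set_option maxHeartbeats 1000000 in
/-- If `θ₁ ≥ θ₃ ≥ θ₂ > 0` with `θ₂ + θ₃ = θ` and `θ₂ ≤ θ/2 ≤ θ₃ ≤ θ₁`, then
`sinh((θ₁+θ₂)/2) sinh((θ₃+θ₂)/2) / (sinh(θ₁/2) sinh(θ₃/2)) ≤ 2 cosh(θ/2) + 2`. -/
theorem sinh_ratio_le (θ₁ θ₂ θ₃ θ : ℝ)
    (h₂pos : 0 < θ₂) (h₂₃ : θ₂ ≤ θ₃) (h₃₁ : θ₃ ≤ θ₁)
    (hsum : θ₂ + θ₃ = θ) (h₂half : θ₂ ≤ θ / 2) (hhalf₃ : θ / 2 ≤ θ₃) :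
    sinh ((θ₁ + θ₂) / 2) * sinh ((θ₃ + θ₂) / 2) / (sinh (θ₁ / 2) * sinh (θ₃ / 2)) ≤
      2 * cosh (θ / 2) + 2 := by
  have hθ : 0 < θ := by linarith
  have ha : 0 < θ₁ / 2 := by linarith
  have hc : 0 < θ₃ / 2 := by linarith
  have hb : 0 < θ₂ / 2 := by linarith
  have hs₁ : 0 < sinh (θ₁ / 2) := Real.sinh_pos_iff.mpr ha
  have hs₃ : 0 < sinh (θ₃ / 2) := Real.sinh_pos_iff.mpr hc
  have hsb : 0 < sinh (θ₂ / 2) := Real.sinh_pos_iff.mpr hb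
  have hden : 0 < sinh (θ₁ / 2) * sinh (θ₃ / 2) := mul_pos hs₁ hs₃
  rw [div_le_iff₀ hden]
  have e1 : (θ₁ + θ₂) / 2 = θ₁ / 2 + θ₂ / 2 := by ring
  have e3 : (θ₃ + θ₂) / 2 = θ₃ / 2 + θ₂ / 2 := by ring
  have e2 : θ / 2 = 2 * (θ / 4) := by ring
  rw [e1, e3, Real.sinh_add, Real.sinh_add, e2, Real.cosh_two_mul]
  -- key facts
  have hch1 : 1 ≤ cosh (θ₁ / 2) := Real.one_le_cosh _
  have hch3 : 1 ≤ cosh (θ₃ / 2) := Real.one_le_cosh _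
  have hch4 : 1 ≤ cosh (θ / 4) := Real.one_le_cosh _
  -- sinh(θ₁/2 - θ₃/2) ≥ 0 : coth monotone
  have hmono : cosh (θ₁ / 2) * sinh (θ₃ / 2) ≤ sinh (θ₁ / 2) * cosh (θ₃ / 2) := by
    have := Real.sinh_nonneg_iff.mpr (by linarith : (0:ℝ) ≤ θ₁ / 2 - θ₃ / 2)
    rw [Real.sinh_sub] at this
    linarith
  -- sinh(θ/4) ≤ sinh(θ₃/2)
  have hs4 : sinh (θ / 4) ≤ sinh (θ₃ / 2) := Real.sinh_le_sinh.mpr (by linarith)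
  have hs4pos : 0 < sinh (θ / 4) := Real.sinh_pos_iff.mpr (by linarith)
  -- sinh((θ₃+θ₂)/2) = sinh(θ/2) = 2 sinh(θ/4) cosh(θ/4)
  have hhalf : sinh (θ₃ / 2) * cosh (θ₂ / 2) + cosh (θ₃ / 2) * sinh (θ₂ / 2)
      = 2 * sinh (θ / 4) * cosh (θ / 4) := by
    rw [← Real.sinh_add, ← Real.sinh_two_mul]
    congr 1
    linarith
  -- Step 2: sinh(θ/2) ≤ 2 cosh(θ/4) sinh(θ₃/2)
  have hQ : sinh (θ₃ / 2) * cosh (θ₂ / 2) + cosh (θ₃ / 2) * sinh (θ₂ / 2)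
      ≤ 2 * cosh (θ / 4) * sinh (θ₃ / 2) := by
    rw [hhalf]; nlinarith
  -- Step 1 : sinh(a+b) sinh c ≤ sinh(c+b) sinh a
  have hstep1 : (sinh (θ₁ / 2) * cosh (θ₂ / 2) + cosh (θ₁ / 2) * sinh (θ₂ / 2)) * sinh (θ₃ / 2)
      ≤ (sinh (θ₃ / 2) * cosh (θ₂ / 2) + cosh (θ₃ / 2) * sinh (θ₂ / 2)) * sinh (θ₁ / 2) := by
    nlinarith
  have hQpos : 0 < sinh (θ₃ / 2) * cosh (θ₂ / 2) + cosh (θ₃ / 2) * sinh (θ₂ / 2) := by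
    nlinarith
  have hcsq : cosh (θ / 4) ^ 2 = sinh (θ / 4) ^ 2 + 1 := Real.cosh_sq _
  have h1 := mul_le_mul hstep1 hQ (le_of_lt hQpos) (by positivity)
  have h2 := mul_le_mul_of_nonneg_right hQ (le_of_lt hs₁)
  have h2s := mul_le_mul_of_nonneg_right h2
    (mul_nonneg (by positivity : (0:ℝ) ≤ 2 * cosh (θ / 4)) hs₃.le)
  have h3 := h1.trans h2s
  have hx : cosh (θ / 4) ^ 2 * (sinh (θ₁ / 2) * sinh (θ₃ / 2) * sinh (θ₃ / 2))
      = (sinh (θ / 4) ^ 2 + 1) * (sinh (θ₁ / 2) * sinh (θ₃ / 2) * sinh (θ₃ / 2)) := by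
    rw [hcsq]
  have h4 : (sinh (θ₁ / 2) * cosh (θ₂ / 2) + cosh (θ₁ / 2) * sinh (θ₂ / 2)) *
        (sinh (θ₃ / 2) * cosh (θ₂ / 2) + cosh (θ₃ / 2) * sinh (θ₂ / 2)) * sinh (θ₃ / 2) ≤
      (2 * (cosh (θ / 4) ^ 2 + sinh (θ / 4) ^ 2) + 2) * (sinh (θ₁ / 2) * sinh (θ₃ / 2)) *
        sinh (θ₃ / 2) := by linarith [h3, hx]
  exact le_of_mul_le_mul_right h4 hs₃
end

section
/- Let u, v ≥ 0 and 0 ≤ a ≤ 1 with a = cos²(α/2) for some angle α. Then the smallest real solution x of the equation sinh(u−x)·sinh(v−x) = a·sinh(u)·sinh(v) satisfies tanh(x) = (sinh(u+v) − sqrt((a·cosh(u+v) + (1−a)·cosh(u−v))² − 1)) / ((a+1)·cosh(u+v) + (1−a)·cosh(u−v)). -/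
open Real

/-- For `u, v ≥ 0` and `0 ≤ a ≤ 1` with `a = cos²(α/2)`, the smallest real solution `x`
of `sinh(u−x) sinh(v−x) = a sinh(u) sinh(v)` satisfies
`tanh x = (sinh(u+v) − √((a cosh(u+v) + (1−a) cosh(u−v))² − 1)) /
  ((a+1) cosh(u+v) + (1−a) cosh(u−v))`. -/
theorem tanh_of_least_solution (a u v x : ℝ)
    (hu : 0 ≤ u) (hv : 0 ≤ v) (ha0 : 0 ≤ a) (ha1 : a ≤ 1)
    (hα : ∃ α : ℝ, a = Real.cos (α / 2) ^ 2)
    (hx : IsLeast {x : ℝ | sinh (u - x) * sinh (v - x) = a * sinh u * sinh v} x) :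
    tanh x =
      (sinh (u + v) - Real.sqrt ((a * cosh (u + v) + (1 - a) * cosh (u - v)) ^ 2 - 1)) /
        ((a + 1) * cosh (u + v) + (1 - a) * cosh (u - v)) := by
  obtain ⟨hmem, hlb⟩ := hx
  set C : ℝ := a * cosh (u + v) + (1 - a) * cosh (u - v) with hCdef
  have hC1 : 1 ≤ C := by
    nlinarith [Real.one_le_cosh (u + v), Real.one_le_cosh (u - v)]
  have hCsq : 0 ≤ C ^ 2 - 1 := by nlinarith
  set t : ℝ := Real.arsinh (Real.sqrt (C ^ 2 - 1)) with htdef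
  have ht0 : 0 ≤ t := Real.arsinh_nonneg_iff.2 (Real.sqrt_nonneg _)
  have hsinht : sinh t = Real.sqrt (C ^ 2 - 1) := Real.sinh_arsinh _
  have hcosht : cosh t = C := by
    rw [htdef, Real.cosh_arsinh, Real.sq_sqrt hCsq]
    rw [show 1 + (C ^ 2 - 1) = C ^ 2 by ring]
    exact Real.sqrt_sq (by linarith)
  -- product to sum formulas
  have hprod : ∀ y : ℝ, 2 * (sinh (u - y) * sinh (v - y))
      = cosh (u + v - 2 * y) - cosh (u - v) := by
    intro y
    rw [show u + v - 2 * y = (u - y) + (v - y) by ring,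
      show u - v = (u - y) - (v - y) by ring]
    linear_combination Real.cosh_sub (u - y) (v - y) - Real.cosh_add (u - y) (v - y)
  have hsv : 2 * (sinh u * sinh v) = cosh (u + v) - cosh (u - v) := by
    rw [Real.cosh_add, Real.cosh_sub]; ring
  have key : ∀ y : ℝ, (sinh (u - y) * sinh (v - y) = a * sinh u * sinh v)
      ↔ cosh (u + v - 2 * y) = C := by
    intro y
    constructor
    · intro h
      rw [hCdef]
      linear_combination 2 * h - hprod y + a * hsv
    · intro h
      rw [hCdef] at h
      linear_combination (hprod y) / 2 + h / 2 - a / 2 * hsv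
  -- x₀ is the least solution
  have hx0mem : cosh (u + v - 2 * ((u + v - t) / 2)) = C := by
    rw [show u + v - 2 * ((u + v - t) / 2) = t by ring, hcosht]
  have hle : x ≤ (u + v - t) / 2 := hlb ((key _).2 hx0mem)
  have hge : (u + v - t) / 2 ≤ x := by
    have h := (key x).1 hmem
    have habs : |u + v - 2 * x| = t := by
      have h2 : cosh (u + v - 2 * x) = cosh t := by rw [h, hcosht]
      have h3 : |u + v - 2 * x| ≤ |t| := Real.cosh_le_cosh.1 h2.le
      have h4 : |t| ≤ |u + v - 2 * x| := Real.cosh_le_cosh.1 h2.ge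
      rw [abs_of_nonneg ht0] at h3 h4
      linarith
    have : u + v - 2 * x ≤ t := habs ▸ le_abs_self _
    linarith
  have hxeq : x = (u + v - t) / 2 := le_antisymm hle hge
  -- tanh half-difference formula
  have aux : ∀ m d : ℝ, tanh d
      = (sinh (m + d) - sinh (m - d)) / (cosh (m + d) + cosh (m - d)) := by
    intro m d
    have h1 : 0 < cosh (m + d) + cosh (m - d) := by positivity
    rw [Real.tanh_eq_sinh_div_cosh, div_eq_div_iff (Real.cosh_pos d).ne' h1.ne',
      Real.sinh_add, Real.sinh_sub, Real.cosh_add, Real.cosh_sub]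
    ring
  have htanh := aux ((u + v + t) / 2) ((u + v - t) / 2)
  rw [show (u + v + t) / 2 + (u + v - t) / 2 = u + v by ring,
    show (u + v + t) / 2 - (u + v - t) / 2 = t by ring] at htanh
  rw [hxeq, htanh, hsinht, hcosht.symm]
  rw [hcosht]
  rw [hCdef]
  ring_nf
end

section
/- Let η > 0 and let θ₁, θ₂ be reals with θ₁ ≥ η/2 and θ₂ ≥ η/2, and let θ₁₂ be a real with −θ₁ ≤ θ₁₂ ≤ θ₂. Then cosh((θ₁+θ₁₂)/2)·cosh((θ₂−θ₁₂)/2) / (sinh(θ₁/2)·sinh(θ₂/2)) ≤ 2 + 2/(cosh(η/2) − 1). -/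
open Real

/-- If `θ₁ ≥ η/2`, `θ₂ ≥ η/2` and `−θ₁ ≤ θ₁₂ ≤ θ₂` for a constant `η > 0`, then
`cosh((θ₁+θ₁₂)/2) cosh((θ₂−θ₁₂)/2) / (sinh(θ₁/2) sinh(θ₂/2)) ≤ 2 + 2/(cosh(η/2) − 1)`. -/
theorem cosh_ratio_le_BII (η θ₁ θ₂ θ₁₂ : ℝ) (hη : 0 < η)
    (h₁ : η / 2 ≤ θ₁) (h₂ : η / 2 ≤ θ₂)
    (h₁₂l : -θ₁ ≤ θ₁₂) (h₁₂u : θ₁₂ ≤ θ₂) :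
    cosh ((θ₁ + θ₁₂) / 2) * cosh ((θ₂ - θ₁₂) / 2) / (sinh (θ₁ / 2) * sinh (θ₂ / 2)) ≤
      2 + 2 / (cosh (η / 2) - 1) := by
  set S := (θ₁ + θ₂) / 2 with hS
  set s := (θ₁ - θ₂) / 2 with hs
  -- product-to-sum identities
  have hnum : cosh ((θ₁ + θ₁₂) / 2) * cosh ((θ₂ - θ₁₂) / 2)
      = (cosh S + cosh (s + θ₁₂)) / 2 := by
    have h1 := Real.cosh_add ((θ₁ + θ₁₂) / 2) ((θ₂ - θ₁₂) / 2)
    have h2 := Real.cosh_sub ((θ₁ + θ₁₂) / 2) ((θ₂ - θ₁₂) / 2)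
    have e1 : (θ₁ + θ₁₂) / 2 + (θ₂ - θ₁₂) / 2 = S := by rw [hS]; ring
    have e2 : (θ₁ + θ₁₂) / 2 - (θ₂ - θ₁₂) / 2 = s + θ₁₂ := by rw [hs]; ring
    rw [e1] at h1; rw [e2] at h2; linarith
  have hden : sinh (θ₁ / 2) * sinh (θ₂ / 2) = (cosh S - cosh s) / 2 := by
    have h1 := Real.cosh_add (θ₁ / 2) (θ₂ / 2)
    have h2 := Real.cosh_sub (θ₁ / 2) (θ₂ / 2)
    have e1 : θ₁ / 2 + θ₂ / 2 = S := by rw [hS]; ring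
    have e2 : θ₁ / 2 - θ₂ / 2 = s := by rw [hs]; ring
    rw [e1] at h1; rw [e2] at h2; linarith
  have hk : 1 < cosh (η / 2) := Real.one_lt_cosh.2 (by positivity)
  -- N ≤ C
  have hN : cosh (s + θ₁₂) ≤ cosh S := by
    rw [Real.cosh_le_cosh]
    rw [abs_le]
    constructor
    · rw [abs_of_nonneg (by rw [hS]; linarith)]; rw [hs, hS]; linarith
    · rw [abs_of_nonneg (by rw [hS]; linarith)]; rw [hs, hS]; linarith
  -- c < C
  have hcC : cosh s < cosh S := by
    rw [Real.cosh_lt_cosh]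
    have : |s| < S := by
      rw [abs_lt]; constructor <;> [skip; skip] <;> (rw [hs, hS]; linarith)
    calc |s| < S := this
      _ = |S| := (abs_of_nonneg (by rw [hS]; linarith)).symm
  -- key: cosh S ≥ cosh s * cosh (η/2)
  have hkey : cosh s * cosh (η / 2) ≤ cosh S := by
    have habs : cosh s = cosh |s| := (Real.cosh_abs s).symm
    have h1 : |s| + η / 2 ≤ S := by
      rcases abs_cases s with ⟨h, _⟩ | ⟨h, _⟩ <;> (rw [h, hs, hS] <;> rw [hs] at h) <;> linarith
    have h2 : cosh (|s| + η / 2) ≤ cosh S := by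
      rw [Real.cosh_le_cosh]
      have ha : |(|s| + η / 2)| = |s| + η / 2 := abs_of_nonneg (by positivity)
      have hb : |S| = S := abs_of_nonneg (by rw [hS]; linarith)
      rw [ha, hb]; exact h1
    have h3 := Real.cosh_add |s| (η / 2)
    have h4 : 0 ≤ sinh |s| := Real.sinh_nonneg_iff.2 (abs_nonneg s)
    have h5 : 0 ≤ sinh (η / 2) := Real.sinh_nonneg_iff.2 (by positivity)
    nlinarith [mul_nonneg h4 h5]
  have hdpos : (0:ℝ) < (cosh S - cosh s) / 2 := by linarith
  rw [hnum, hden, div_le_iff₀ hdpos]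
  have hc1 : (1:ℝ) ≤ cosh s := Real.one_le_cosh s
  have hk1 : (0:ℝ) < cosh (η / 2) - 1 := by linarith
  have hq : 2 / (cosh (η / 2) - 1) * (cosh (η / 2) - 1) = 2 :=
    div_mul_cancel₀ _ (ne_of_gt hk1)
  nlinarith [mul_pos hk1 hdpos, mul_nonneg (le_of_lt hk1) (sub_nonneg.2 hN),
    div_nonneg (by norm_num : (0:ℝ) ≤ 2) (le_of_lt hk1)]
end

section
/- Suppose reals θ₁ ≥ η/2, θ₂ ≥ η/2, 0 ≤ θ_m ≤ η/2, and θ₁₂ ∈ [−θ_m, θ_m + θ₂] for a fixed constant η with 0 < η. Then cosh((θ₁+θ₁₂)/2)·cosh((θ₂−θ₁₂)/2)/(sinh(θ₁/2)·sinh(θ₂/2)) ≤ 2·cosh(η/2) + 3 + 2/(cosh(η/2) − 1). -/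
open Real

private lemma key_ineq (q x : ℝ) (hq : 1 < q) (hx : q ≤ x) :
    (x + x⁻¹) / 2 + (x * q + (x * q)⁻¹) / 2 ≤
      (2 * ((q + q⁻¹) / 2) + 3 + 2 / ((q + q⁻¹) / 2 - 1)) *
        ((x + x⁻¹) / 2 - (x / q + q / x) / 2) := by
  have hq0 : 0 < q := by linarith
  have hx0 : 0 < x := by linarith
  have hc : (q + q⁻¹) / 2 - 1 = (q - 1) ^ 2 / (2 * q) := by
    field_simp; ring
  rw [hc, ← sub_nonneg]
  have h1 : 0 ≤ x ^ 2 - q ^ 2 := by nlinarith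
  have h2 : 0 ≤ q ^ 2 - 1 := by nlinarith
  have key : (2 * ((q + q⁻¹) / 2) + 3 + 2 / ((q - 1) ^ 2 / (2 * q))) *
        ((x + x⁻¹) / 2 - (x / q + q / x) / 2) -
      ((x + x⁻¹) / 2 + (x * q + (x * q)⁻¹) / 2) =
      (q ^ 2 - 1) * (1 + q ^ 2) * (x ^ 2 - q ^ 2) / ((q - 1) ^ 2 * (2 * q ^ 2 * x)) := by
    have hq1 : q - 1 ≠ 0 := by intro h; nlinarith
    field_simp
    ring
  rw [key]
  positivity

/-- If `θ₁ ≥ η/2`, `θ₂ ≥ η/2`, `0 ≤ θ_m ≤ η/2` and `−θ_m ≤ θ₁₂ ≤ θ_m + θ₂` for a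
constant `η > 0`, then `cosh((θ₁+θ₁₂)/2) cosh((θ₂−θ₁₂)/2)/(sinh(θ₁/2) sinh(θ₂/2))
≤ 2 cosh(η/2) + 3 + 2/(cosh(η/2) − 1)`. -/
theorem cosh_ratio_le_BIII (η θ₁ θ₂ θm θ₁₂ : ℝ) (hη : 0 < η)
    (h₁ : η / 2 ≤ θ₁) (h₂ : η / 2 ≤ θ₂)
    (hm0 : 0 ≤ θm) (hm : θm ≤ η / 2)
    (h₁₂l : -θm ≤ θ₁₂) (h₁₂u : θ₁₂ ≤ θm + θ₂) :
    cosh ((θ₁ + θ₁₂) / 2) * cosh ((θ₂ - θ₁₂) / 2) / (sinh (θ₁ / 2) * sinh (θ₂ / 2)) ≤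
      2 * cosh (η / 2) + 3 + 2 / (cosh (η / 2) - 1) := by
  set s : ℝ := (θ₁ + θ₂) / 2 with hs
  set h : ℝ := η / 2 with hh
  have hh0 : 0 < h := by positivity
  have hsh : h ≤ s := by simp only [hs, hh]; linarith
  -- numerator product formula
  have num_eq : cosh ((θ₁ + θ₁₂) / 2) * cosh ((θ₂ - θ₁₂) / 2) =
      (cosh s + cosh ((θ₁ - θ₂ + 2 * θ₁₂) / 2)) / 2 := by
    have e1 : s = (θ₁ + θ₁₂) / 2 + (θ₂ - θ₁₂) / 2 := by rw [hs]; ring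
    have e2 : (θ₁ - θ₂ + 2 * θ₁₂) / 2 = (θ₁ + θ₁₂) / 2 - (θ₂ - θ₁₂) / 2 := by ring
    rw [e1, e2, Real.cosh_add, Real.cosh_sub]
    ring
  have den_eq : sinh (θ₁ / 2) * sinh (θ₂ / 2) =
      (cosh s - cosh ((θ₁ - θ₂) / 2)) / 2 := by
    have e1 : s = θ₁ / 2 + θ₂ / 2 := by rw [hs]; ring
    have e2 : (θ₁ - θ₂) / 2 = θ₁ / 2 - θ₂ / 2 := by ring
    rw [e1, e2, Real.cosh_add, Real.cosh_sub]
    ring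
  -- bounds on cosh terms
  have hnum_le : cosh ((θ₁ - θ₂ + 2 * θ₁₂) / 2) ≤ cosh (s + h) := by
    rw [Real.cosh_le_cosh]
    rw [abs_le]
    have : 0 ≤ s + h := by linarith
    rw [abs_of_nonneg this]
    constructor <;> · simp only [hs, hh]; linarith
  have hden_ge : cosh ((θ₁ - θ₂) / 2) ≤ cosh (s - h) := by
    rw [Real.cosh_le_cosh, abs_le]
    have : 0 ≤ s - h := by linarith
    rw [abs_of_nonneg this]
    constructor <;> · simp only [hs, hh]; linarith
  have hden_pos : 0 < sinh (θ₁ / 2) * sinh (θ₂ / 2) :=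
    mul_pos (Real.sinh_pos_iff.mpr (by linarith)) (Real.sinh_pos_iff.mpr (by linarith))
  -- key inequality in exponential form
  have key := key_ineq (exp h) (exp s) (by rw [show (1:ℝ) = exp 0 from (Real.exp_zero).symm]; exact Real.exp_lt_exp.mpr hh0)
    (Real.exp_le_exp.mpr hsh)
  have e1 : cosh s = (exp s + (exp s)⁻¹) / 2 := by
    rw [Real.cosh_eq, Real.exp_neg]
  have e2 : cosh (s + h) = (exp s * exp h + (exp s * exp h)⁻¹) / 2 := by
    rw [Real.cosh_eq, Real.exp_neg, Real.exp_add]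
  have e3 : cosh (s - h) = (exp s / exp h + exp h / exp s) / 2 := by
    rw [Real.cosh_eq, neg_sub, Real.exp_sub, Real.exp_sub]
  have e4 : cosh h = (exp h + (exp h)⁻¹) / 2 := by
    rw [Real.cosh_eq, Real.exp_neg]
  have key' : cosh s + cosh (s + h) ≤
      (2 * cosh h + 3 + 2 / (cosh h - 1)) * (cosh s - cosh (s - h)) := by
    rw [e1, e2, e3, e4]
    convert key using 3
  -- RHS positivity pieces
  have hc1 : 1 < cosh h := Real.one_lt_cosh.mpr (ne_of_gt hh0)
  have hR0 : 0 < 2 * cosh h + 3 + 2 / (cosh h - 1) := by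
    have : 0 < 2 / (cosh h - 1) := div_pos two_pos (by linarith)
    linarith
  rw [div_le_iff₀ hden_pos, num_eq, den_eq]
  have step1 : (cosh s + cosh ((θ₁ - θ₂ + 2 * θ₁₂) / 2)) / 2 ≤
      (cosh s + cosh (s + h)) / 2 := by linarith
  have step2 : (2 * cosh h + 3 + 2 / (cosh h - 1)) * ((cosh s - cosh (s - h)) / 2) ≤
      (2 * cosh h + 3 + 2 / (cosh h - 1)) * ((cosh s - cosh ((θ₁ - θ₂) / 2)) / 2) := by
    apply mul_le_mul_of_nonneg_left (by linarith) (le_of_lt hR0)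
  calc (cosh s + cosh ((θ₁ - θ₂ + 2 * θ₁₂) / 2)) / 2
      ≤ (cosh s + cosh (s + h)) / 2 := step1
    _ ≤ (2 * cosh h + 3 + 2 / (cosh h - 1)) * ((cosh s - cosh (s - h)) / 2) := by linarith
    _ ≤ (2 * cosh h + 3 + 2 / (cosh h - 1)) * ((cosh s - cosh ((θ₁ - θ₂) / 2)) / 2) := step2
end

section
/- Suppose positive reals θ₁, θ₂, θ₃, θ₄ and θ satisfy θ₂ + θ₃ = θ, θ₂ ≤ θ₃, θ₁ ≥ θ₃, and θ₄ ≥ θ/2, and all four θᵢ ≥ 0 with θ₂ ≤ θ/2. Then sinh((θ₁+θ)/2)·sinh((θ+θ₄)/2)/(sinh(θ₁/2)·sinh(θ₄/2)) ≤ (2·cosh(θ/2)+1)². -/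
open Real

lemma key_sinh (x θ : ℝ) (hθ : 0 < θ) (hx : θ/2 ≤ x) :
    sinh ((x + θ) / 2) ≤ (2 * cosh (θ/2) + 1) * sinh (x/2) := by
  have h1 : (x + θ)/2 = x/2 + θ/2 := by ring
  have h2 : (θ:ℝ)/2 = θ/4 + θ/4 := by ring
  rw [h1, sinh_add, h2, sinh_add, cosh_add]
  have h3 : sinh (x/2 - θ/4) = sinh (x/2) * cosh (θ/4) - cosh (x/2) * sinh (θ/4) :=
    sinh_sub _ _
  have h4 : 0 ≤ sinh (x/2 - θ/4) := sinh_nonneg_iff.2 (by linarith)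
  have h5 : 0 < cosh (θ/4) := cosh_pos (θ/4)
  have hsq : sinh (θ/4)^2 = cosh (θ/4)^2 - 1 := by
    have := cosh_sq_sub_sinh_sq (θ/4); nlinarith
  have h4' : 0 ≤ sinh (x/2) * cosh (θ/4) - cosh (x/2) * sinh (θ/4) := h3 ▸ h4
  have hs : 0 ≤ sinh (x/2) := sinh_nonneg_iff.2 (by linarith)
  have heq : sinh (x/2) * sinh (θ/4)^2 = sinh (x/2) * (cosh (θ/4)^2 - 1) := by rw [hsq]
  nlinarith [mul_nonneg h5.le h4', heq]

/-- If positive reals satisfy `θ₂ + θ₃ = θ`, `θ₂ ≤ θ₃`, `θ₁ ≥ θ₃`, `θ₄ ≥ θ/2` and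
`θ₂ ≤ θ/2`, then `sinh((θ₁+θ)/2) sinh((θ+θ₄)/2)/(sinh(θ₁/2) sinh(θ₄/2)) ≤
(2 cosh(θ/2) + 1)²`. -/
theorem sinh_ratio_le_sq (θ₁ θ₂ θ₃ θ₄ θ : ℝ)
    (h₁pos : 0 < θ₁) (h₂pos : 0 < θ₂) (h₃pos : 0 < θ₃) (h₄pos : 0 < θ₄) (hθpos : 0 < θ)
    (hsum : θ₂ + θ₃ = θ) (h₂₃ : θ₂ ≤ θ₃) (h₃₁ : θ₃ ≤ θ₁)
    (h₄ : θ / 2 ≤ θ₄) (h₂half : θ₂ ≤ θ / 2) :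
    sinh ((θ₁ + θ) / 2) * sinh ((θ + θ₄) / 2) / (sinh (θ₁ / 2) * sinh (θ₄ / 2)) ≤
      (2 * cosh (θ / 2) + 1) ^ 2 := by
  have h1 : θ/2 ≤ θ₁ := by linarith
  have ha : 0 < sinh (θ₁/2) := sinh_pos_iff.2 (by linarith)
  have hb : 0 < sinh (θ₄/2) := sinh_pos_iff.2 (by linarith)
  have hA := key_sinh θ₁ θ hθpos h1
  have hB' := key_sinh θ₄ θ hθpos h₄
  have hB : sinh ((θ + θ₄)/2) ≤ (2 * cosh (θ/2) + 1) * sinh (θ₄/2) := by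
    rw [show (θ + θ₄)/2 = (θ₄ + θ)/2 by ring]; exact hB'
  have hApos : 0 < sinh ((θ₁ + θ)/2) := sinh_pos_iff.2 (by linarith)
  have hBpos : 0 < sinh ((θ + θ₄)/2) := sinh_pos_iff.2 (by linarith)
  rw [div_le_iff₀ (by positivity)]
  nlinarith [mul_le_mul hA hB hBpos.le (by positivity : (0:ℝ) ≤ (2*cosh (θ/2)+1) * sinh (θ₁/2))]
end

section
/- Suppose positive reals θ₁, θ₅, θ and nonnegative θ₄ satisfy θ₁ ≥ θ/2, θ₅ ≥ θ/2, θ₄ ≤ θ/2. Then sinh((θ₁ + 3θ/2)/2)·sinh((θ₅ + 3θ/2)/2)/(sinh(θ₁/2)·sinh(θ₅/2)) ≤ sinh²(θ)/sinh²(θ/4) = 8·(cosh³(θ/2) + cosh²(θ/2)). -/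
open Real

lemma sinh_mul_sinh' (p q : ℝ) :
    sinh p * sinh q = (cosh (p + q) - cosh (p - q)) / 2 := by
  rw [Real.cosh_add, Real.cosh_sub]; ring

lemma ratio_mono (x y c : ℝ) (hy : 0 < y) (hxy : y ≤ x) (hc : 0 ≤ c) :
    sinh ((x + c) / 2) * sinh (y / 2) ≤ sinh ((y + c) / 2) * sinh (x / 2) := by
  rw [sinh_mul_sinh', sinh_mul_sinh']
  have h : cosh ((y + c) / 2 - x / 2) ≤ cosh ((x + c) / 2 - y / 2) := by
    rw [Real.cosh_le_cosh]
    rw [abs_le, abs_of_nonneg (by linarith)]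
    constructor <;> [skip; skip] <;> nlinarith [abs_nonneg ((y + c) / 2 - x / 2)]
  have h2 : (x + c) / 2 + y / 2 = (y + c) / 2 + x / 2 := by ring
  rw [h2]; linarith

/-- If `θ₁ ≥ θ/2`, `θ₅ ≥ θ/2` and `0 ≤ θ₄ ≤ θ/2` for `θ > 0`, then
`sinh((θ₁+3θ/2)/2) sinh((θ₅+3θ/2)/2)/(sinh(θ₁/2) sinh(θ₅/2)) ≤ sinh²θ / sinh²(θ/4)`,
and `sinh²θ / sinh²(θ/4) = 8 (cosh³(θ/2) + cosh²(θ/2))`. -/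
theorem sinh_ratio_le_AIII (θ₁ θ₅ θ₄ θ : ℝ)
    (hθpos : 0 < θ) (h₁ : θ / 2 ≤ θ₁) (h₅ : θ / 2 ≤ θ₅)
    (h₄0 : 0 ≤ θ₄) (h₄ : θ₄ ≤ θ / 2) :
    sinh ((θ₁ + 3 * θ / 2) / 2) * sinh ((θ₅ + 3 * θ / 2) / 2) /
        (sinh (θ₁ / 2) * sinh (θ₅ / 2)) ≤
      sinh θ ^ 2 / sinh (θ / 4) ^ 2 ∧
    sinh θ ^ 2 / sinh (θ / 4) ^ 2 = 8 * (cosh (θ / 2) ^ 3 + cosh (θ / 2) ^ 2) := by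
  have hs1 : 0 < sinh (θ₁ / 2) := Real.sinh_pos_iff.2 (by linarith)
  have hs5 : 0 < sinh (θ₅ / 2) := Real.sinh_pos_iff.2 (by linarith)
  have hs4 : 0 < sinh (θ / 4) := Real.sinh_pos_iff.2 (by linarith)
  have key1 := ratio_mono θ₁ (θ / 2) (3 * θ / 2) (by linarith) h₁ (by linarith)
  have key5 := ratio_mono θ₅ (θ / 2) (3 * θ / 2) (by linarith) h₅ (by linarith)
  have e1 : (θ / 2 + 3 * θ / 2) / 2 = θ := by ring
  have e2 : (θ / 2) / 2 = θ / 4 := by ring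
  rw [e1, e2] at key1 key5
  have hn1 : 0 < sinh ((θ₁ + 3 * θ / 2) / 2) := Real.sinh_pos_iff.2 (by linarith)
  have hn5 : 0 < sinh ((θ₅ + 3 * θ / 2) / 2) := Real.sinh_pos_iff.2 (by linarith)
  have hsθ : 0 < sinh θ := Real.sinh_pos_iff.2 hθpos
  constructor
  · rw [div_le_div_iff₀ (by positivity) (by positivity)]
    nlinarith [mul_le_mul key1 key5 (by positivity) (by positivity)]
  · have h1 : sinh θ = 2 * sinh (θ / 2) * cosh (θ / 2) := by
      rw [← Real.sinh_two_mul]; ring_nf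
    have h2 : sinh (θ / 2) = 2 * sinh (θ / 4) * cosh (θ / 4) := by
      rw [← Real.sinh_two_mul]; ring_nf
    have h3 : cosh (θ / 4) ^ 2 = (cosh (θ / 2) + 1) / 2 := by
      have := Real.cosh_sq (θ / 4)
      have h4 : cosh (θ / 2) = 2 * sinh (θ / 4) ^ 2 + 1 := by
        rw [show θ / 2 = θ / 4 + θ / 4 by ring, Real.cosh_add]
        nlinarith [Real.cosh_sq_sub_sinh_sq (θ / 4)]
      nlinarith
    have h5 : sinh θ ^ 2 = 16 * sinh (θ / 4) ^ 2 * cosh (θ / 4) ^ 2 * cosh (θ / 2) ^ 2 := by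
      rw [h1, h2]; ring
    field_simp
    rw [h5, h3]; ring
end
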